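/- arXiv:1810.03066 — 5 statements merged into one kernel-verified Lean document; each statement's English description precedes it below -/
import Mathlib

section
/- Let a, b > 0 with a + b > 1, a ≠ 1 and b ≠ 1, and set c = min{a, b, a+b−1}. Then there exists a constant C > 0, depending only on a and b, such that for all α, β ∈ ℝ: ∫_ℝ dx / (⟨x−α⟩^a ⟨x−β⟩^b) ≤ C ⟨α−β⟩^{−c}. -/
/-!
Split `ℝ` according to whether `x` is closer to `α` or to `β`. Where `|x - α| ≤ |x - β|`, the
factor `⟨x - β⟩ ^ (-b)` is at most `(⟨α - β⟩ / 2) ^ (-b)` and at most `⟨x - α⟩ ^ (-b)`. Using the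
first bound within `R = |α - β| / 2` of `α` and the second beyond, this half of the integral is at
most `(⟨α - β⟩ / 2) ^ (-b) ∫_{|y| ≤ R} ⟨y⟩ ^ (-a) + ∫_{|y| > R} ⟨y⟩ ^ (-(a + b))`, which is
`O(⟨α - β⟩ ^ (-b + max (1 - a) 0) + ⟨α - β⟩ ^ (1 - (a + b)))`; the other half is symmetric.
-/

open MeasureTheory Set

theorem setIntegral_preimage_abs (g : ℝ → ℝ) {s : Set ℝ} (hs : MeasurableSet s) :
    ∫ x in abs ⁻¹' s, g |x| = 2 * ∫ r in s ∩ Ioi 0, g r := by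
  rw [← integral_indicator (measurable_abs hs),
    show (abs ⁻¹' s).indicator (fun x => g |x|) = fun x => s.indicator g |x| from
      funext fun _ => indicator_comp_right abs,
    integral_comp_abs (f := s.indicator g), setIntegral_indicator hs, inter_comm]

theorem setIntegral_abs_le_one_add_abs_rpow_neg {p : ℝ} (hp : p ≠ 1) {R : ℝ} (hR : 0 ≤ R) :
    ∫ x in abs ⁻¹' Iic R, (1 + |x|) ^ (-p) = 2 * (((1 + R) ^ (1 - p) - 1) / (1 - p)) := by
  have hp' : -p ≠ -1 := by simpa using hp
  rw [setIntegral_preimage_abs (fun r => (1 + r) ^ (-p)) measurableSet_Iic, inter_comm,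
    Ioi_inter_Iic, ← intervalIntegral.integral_of_le hR,
    intervalIntegral.integral_comp_add_left (fun r => r ^ (-p)), integral_rpow (.inr ⟨hp', ?_⟩)]
  · norm_num [sub_eq_add_neg, add_comm]
  · rw [uIcc_of_le (by linarith)]
    exact fun h => by linarith [h.1]

theorem setIntegral_abs_gt_one_add_abs_rpow_neg {q : ℝ} (hq : 1 < q) {R : ℝ} (hR : 0 ≤ R) :
    ∫ x in abs ⁻¹' Ioi R, (1 + |x|) ^ (-q) = 2 * ((1 + R) ^ (1 - q) / (q - 1)) := by
  have hshift : ∫ r in Ioi R, (1 + r) ^ (-q) = ∫ y in Ioi (1 + R), y ^ (-q) := by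
    have := (measurableEmbedding_addLeft (1 : ℝ)).setIntegral_map
      (μ := volume) (fun y => y ^ (-q)) (Ioi (1 + R))
    rw [map_add_left_eq_self] at this
    simpa using this.symm
  rw [setIntegral_preimage_abs (fun r => (1 + r) ^ (-q)) measurableSet_Ioi,
    inter_eq_left.mpr (Ioi_subset_Ioi hR), hshift,
    integral_Ioi_rpow_of_lt (by linarith) (by linarith)]
  congr 1
  rw [show -q + 1 = 1 - q by ring, show q - 1 = -(1 - q) by ring, div_neg, neg_div]

theorem continuous_one_add_abs_rpow (p : ℝ) : Continuous fun x : ℝ => (1 + |x|) ^ p :=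
  (continuous_const.add continuous_abs).rpow_const fun x =>
    .inl (by positivity : (0 : ℝ) < 1 + |x|).ne'

theorem integrable_one_add_abs_rpow_neg {q : ℝ} (hq : 1 < q) :
    Integrable fun x : ℝ => (1 + |x|) ^ (-q) := by
  simpa using integrable_one_add_norm (E := ℝ) (μ := volume) (r := q) (by simpa using hq)

theorem div_two_rpow_neg {x : ℝ} (hx : 0 ≤ x) (s : ℝ) : (x / 2) ^ (-s) = 2 ^ s * x ^ (-s) := by
  rw [Real.div_rpow hx zero_le_two, Real.rpow_neg zero_le_two, div_inv_eq_mul, mul_comm]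

theorem rpow_sub_one_div_le {u : ℝ} (hu : 1 ≤ u) {p : ℝ} (hp : p ≠ 1) :
    (u ^ (1 - p) - 1) / (1 - p) ≤ u ^ max (1 - p) 0 / |1 - p| := by
  rcases hp.lt_or_gt with hp | hp
  · rw [max_eq_left (by linarith), abs_of_pos (by linarith)]
    gcongr
    linarith
  · rw [max_eq_right (by linarith), Real.rpow_zero, abs_of_neg (by linarith), ← neg_div_neg_eq,
      neg_sub, neg_sub]
    gcongr
    exact sub_le_self _ (Real.rpow_nonneg (zero_le_one.trans hu) _)

noncomputable def majorant (a b r : ℝ) (x : ℝ) : ℝ :=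
  (abs ⁻¹' Iic (r / 2)).indicator (fun y => ((1 + r) / 2) ^ (-b) * (1 + |y|) ^ (-a)) x +
    (abs ⁻¹' Ioi (r / 2)).indicator (fun y => (1 + |y|) ^ (-(a + b))) x

theorem majorant_nonneg (a b : ℝ) {r : ℝ} (hr : 0 ≤ r) (x : ℝ) : 0 ≤ majorant a b r x := by
  have : 0 ≤ (1 + r) / 2 := by positivity
  unfold majorant
  exact add_nonneg (indicator_nonneg (fun y _ => by positivity) x)
    (indicator_nonneg (fun y _ => by positivity) x)

theorem one_div_mul_le_majorant (a : ℝ) {b : ℝ} (hb : 0 ≤ b) {x t : ℝ} (h : |x| ≤ |x - t|) :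
    1 / ((1 + |x|) ^ a * (1 + |x - t|) ^ b) ≤ majorant a b |t| x := by
  have hx : 0 < 1 + |x| := by positivity
  have htri : |t| ≤ |x| + |x - t| := by simpa using abs_sub x (x - t)
  rw [one_div, mul_inv, ← Real.rpow_neg hx.le, ← Real.rpow_neg (by positivity), majorant]
  by_cases hnear : |x| ≤ |t| / 2
  · rw [indicator_of_mem (show x ∈ abs ⁻¹' Iic (|t| / 2) from hnear),
      indicator_of_notMem (show x ∉ abs ⁻¹' Ioi (|t| / 2) from not_lt.mpr hnear), add_zero,
      mul_comm]
    exact mul_le_mul_of_nonneg_right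
      (Real.rpow_le_rpow_of_nonpos (by positivity) (by linarith) (by linarith)) (by positivity)
  · rw [indicator_of_notMem (show x ∉ abs ⁻¹' Iic (|t| / 2) from hnear),
      indicator_of_mem (show x ∈ abs ⁻¹' Ioi (|t| / 2) from not_le.mp hnear), zero_add,
      neg_add, Real.rpow_add hx]
    exact mul_le_mul_of_nonneg_left
      (Real.rpow_le_rpow_of_nonpos hx (by linarith) (by linarith)) (by positivity)

theorem one_div_mul_le_majorant_add {a b : ℝ} (ha : 0 ≤ a) (hb : 0 ≤ b) (α β x : ℝ) :
    1 / ((1 + |x - α|) ^ a * (1 + |x - β|) ^ b)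
      ≤ majorant a b |α - β| (x - α) + majorant b a |α - β| (x - β) := by
  rcases le_total |x - α| |x - β| with h | h
  · have := one_div_mul_le_majorant a hb (t := β - α) (by rwa [sub_sub_sub_cancel_right])
    rw [sub_sub_sub_cancel_right, abs_sub_comm β] at this
    linarith [majorant_nonneg b a (abs_nonneg (α - β)) (x - β)]
  · have := one_div_mul_le_majorant b ha (t := α - β) (by rwa [sub_sub_sub_cancel_right])
    rw [sub_sub_sub_cancel_right, mul_comm] at this
    linarith [majorant_nonneg a b (abs_nonneg (α - β)) (x - α)]

theorem integrableOn_majorant_near (a b r : ℝ) :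
    IntegrableOn (fun y : ℝ => ((1 + r) / 2) ^ (-b) * (1 + |y|) ^ (-a)) (abs ⁻¹' Iic (r / 2)) := by
  have hball : (abs ⁻¹' Iic (r / 2) : Set ℝ) = Metric.closedBall 0 (r / 2) := by ext; simp
  rw [hball]
  exact ((continuous_one_add_abs_rpow _).const_mul _).continuousOn.integrableOn_compact
    (isCompact_closedBall 0 _)

theorem integrable_majorant (a : ℝ) {b : ℝ} (hab : 1 < a + b) (r : ℝ) :
    Integrable (majorant a b r) :=
  ((integrableOn_majorant_near a b r).integrable_indicator (measurable_abs measurableSet_Iic)).add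
    ((integrable_one_add_abs_rpow_neg hab).indicator (measurable_abs measurableSet_Ioi))

theorem integral_majorant {a b : ℝ} (ha : a ≠ 1) (hab : 1 < a + b) {r : ℝ} (hr : 0 ≤ r) :
    ∫ x, majorant a b r x = ((1 + r) / 2) ^ (-b) * (2 * (((1 + r / 2) ^ (1 - a) - 1) / (1 - a)))
      + 2 * ((1 + r / 2) ^ (1 - (a + b)) / (a + b - 1)) := by
  have hr2 : 0 ≤ r / 2 := by positivity
  unfold majorant
  rw [integral_add ((integrableOn_majorant_near a b r).integrable_indicator
      (measurable_abs measurableSet_Iic))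
      ((integrable_one_add_abs_rpow_neg hab).indicator (measurable_abs measurableSet_Ioi)),
    integral_indicator (measurable_abs measurableSet_Iic),
    integral_indicator (measurable_abs measurableSet_Ioi), integral_const_mul,
    setIntegral_abs_le_one_add_abs_rpow_neg ha hr2, setIntegral_abs_gt_one_add_abs_rpow_neg hab hr2]

theorem integral_majorant_le {a b c : ℝ} (ha : a ≠ 1) (hab : 1 < a + b) (hcb : c ≤ b)
    (hcab : c ≤ a + b - 1) :
    ∃ K, 0 < K ∧ ∀ r, 0 ≤ r → ∫ x, majorant a b r x ≤ K * (1 + r) ^ (-c) := by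
  have ha' : 0 < |1 - a| := abs_pos.mpr (sub_ne_zero.mpr (Ne.symm ha))
  have hab' : 0 < a + b - 1 := by linarith
  refine ⟨2 * 2 ^ b / |1 - a| + 2 * 2 ^ (a + b - 1) / (a + b - 1), by positivity, fun r hr => ?_⟩
  have hτ : 1 ≤ 1 + r := by linarith
  have hnear : ((1 + r) / 2) ^ (-b) * (2 * (((1 + r / 2) ^ (1 - a) - 1) / (1 - a)))
      ≤ 2 * 2 ^ b / |1 - a| * (1 + r) ^ (-c) :=
    calc _ ≤ 2 ^ b * (1 + r) ^ (-b) * (2 * ((1 + r) ^ max (1 - a) 0 / |1 - a|)) := by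
          rw [div_two_rpow_neg (by linarith)]
          gcongr 2 ^ b * (1 + r) ^ (-b) * (2 * ?_)
          refine (rpow_sub_one_div_le (u := 1 + r / 2) (by linarith) ha).trans ?_
          gcongr
          linarith
      _ = 2 * 2 ^ b / |1 - a| * (1 + r) ^ (-b + max (1 - a) 0) := by
          rw [Real.rpow_add (by linarith)]; ring
      _ ≤ _ := by
          gcongr
          rcases le_total a 1 with h | h <;> simp [h] <;> linarith
  have hfar : 2 * ((1 + r / 2) ^ (1 - (a + b)) / (a + b - 1))
      ≤ 2 * 2 ^ (a + b - 1) / (a + b - 1) * (1 + r) ^ (-c) :=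
    calc _ ≤ 2 * (((1 + r) / 2) ^ (-(a + b - 1)) / (a + b - 1)) := by
          rw [show 1 - (a + b) = -(a + b - 1) by ring]
          gcongr 2 * (?_ / _)
          exact Real.rpow_le_rpow_of_nonpos (by positivity) (by linarith) (by linarith)
      _ = 2 * 2 ^ (a + b - 1) / (a + b - 1) * (1 + r) ^ (-(a + b - 1)) := by
          rw [div_two_rpow_neg (by linarith)]; ring
      _ ≤ _ := by gcongr
  rw [integral_majorant ha hab hr]
  linarith

theorem stmt_0 (a b : ℝ) (ha : 0 < a) (hb : 0 < b) (hab : 1 < a + b)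
    (ha1 : a ≠ 1) (hb1 : b ≠ 1) :
    ∃ C : ℝ, 0 < C ∧ ∀ α β : ℝ,
      (∫ x : ℝ, 1 / ((1 + |x - α|) ^ a * (1 + |x - β|) ^ b))
        ≤ C * (1 + |α - β|) ^ (-(min (min a b) (a + b - 1))) := by
  set c := min (min a b) (a + b - 1)
  have hba : 1 < b + a := by linarith
  obtain ⟨K₁, hK₁, hint₁⟩ := integral_majorant_le (c := c) ha1 hab
    ((min_le_left _ _).trans (min_le_right _ _)) (min_le_right _ _)
  obtain ⟨K₂, hK₂, hint₂⟩ := integral_majorant_le (c := c) hb1 hba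
    ((min_le_left _ _).trans (min_le_left _ _)) ((min_le_right _ _).trans_eq (by ring))
  refine ⟨K₁ + K₂, by positivity, fun α β => ?_⟩
  have hint_a := (integrable_majorant a hab |α - β|).comp_sub_right α
  have hint_b := (integrable_majorant b hba |α - β|).comp_sub_right β
  calc ∫ x, 1 / ((1 + |x - α|) ^ a * (1 + |x - β|) ^ b)
      ≤ ∫ x, (majorant a b |α - β| (x - α) + majorant b a |α - β| (x - β)) :=
        integral_mono_of_nonneg (.of_forall fun x => by positivity) (hint_a.add hint_b)
          (.of_forall (one_div_mul_le_majorant_add ha.le hb.le α β))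
    _ = (∫ x, majorant a b |α - β| x) + ∫ x, majorant b a |α - β| x := by
        rw [integral_add hint_a hint_b, integral_sub_right_eq_self, integral_sub_right_eq_self]
    _ ≤ K₁ * (1 + |α - β|) ^ (-c) + K₂ * (1 + |α - β|) ^ (-c) :=
        add_le_add (hint₁ _ (abs_nonneg _)) (hint₂ _ (abs_nonneg _))
    _ = (K₁ + K₂) * (1 + |α - β|) ^ (-c) := (add_mul _ _ _).symm
end

section
/- Let b > 1. There exists a constant C > 0, depending only on b, such that for all nonzero real numbers a and η: ∫_ℝ dx / ⟨a(x²−η²)⟩^b ≤ C / |aη|. -/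
open MeasureTheory Real

theorem stmt_1 (b : ℝ) (hb : 1 < b) :
    ∃ C : ℝ, 0 < C ∧ ∀ a η : ℝ, a ≠ 0 → η ≠ 0 →
      (∫ x : ℝ, 1 / (1 + |a * (x ^ 2 - η ^ 2)|) ^ b) ≤ C / |a * η| := by
  set f : ℝ → ℝ := fun t => (1 + |t|) ^ (-b) with hf_def
  have hf : Integrable f := by
    have := integrable_one_add_norm (E := ℝ) (μ := volume) (r := b) (by simpa using hb)
    simpa [hf_def, Real.norm_eq_abs] using this
  set I : ℝ := ∫ t, f t with hI_def
  have hI0 : 0 ≤ I := integral_nonneg fun t => Real.rpow_nonneg (by positivity) _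
  refine ⟨2 * I + 1, by positivity, fun a η ha hη => ?_⟩
  set c : ℝ := |a * η| with hc_def
  have hc : 0 < c := abs_pos.2 (mul_ne_zero ha hη)
  set e : ℝ := |η| with he_def
  have he : 0 < e := abs_pos.2 hη
  have key : ∀ x : ℝ, 1 / (1 + |a * (x ^ 2 - η ^ 2)|) ^ b
      ≤ f (c * (x - e)) + f (c * (x + e)) := by
    intro x
    have hfact : |a * (x ^ 2 - η ^ 2)| = |a| * (|x - e| * |x + e|) := by
      have : x ^ 2 - η ^ 2 = (x - e) * (x + e) := by
        rw [he_def]; rcases abs_cases η with ⟨h, _⟩ | ⟨h, _⟩ <;> rw [h] <;> ring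
      rw [this, abs_mul, abs_mul]
    have hce : c = |a| * e := by rw [hc_def, abs_mul, he_def]
    have base : ∀ t : ℝ, 1 + |c * t| ≤ 1 + |a * (x ^ 2 - η ^ 2)| →
        1 / (1 + |a * (x ^ 2 - η ^ 2)|) ^ b ≤ f (c * t) := by
      intro t ht
      rw [hf_def]
      simp only
      rw [Real.rpow_neg (by positivity), ← one_div]
      gcongr
    rcases le_or_gt e |x + e| with h | h
    · have h1 : 1 / (1 + |a * (x ^ 2 - η ^ 2)|) ^ b ≤ f (c * (x - e)) := by
        apply base
        rw [hfact, abs_mul, abs_of_pos hc, hce]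
        have : |a| * e * |x - e| ≤ |a| * (|x - e| * |x + e|) := by
          rw [mul_assoc, mul_comm e]
          gcongr
        linarith
      have h2 : 0 ≤ f (c * (x + e)) := Real.rpow_nonneg (by positivity) _
      linarith
    · have hxe : e ≤ |x - e| := by
        have : |x - e| ≥ 2 * e - |x + e| := by
          have := abs_sub_abs_le_abs_sub (x + e) (-(x - e))
          simp only [abs_neg] at this
          have h2 : (x + e) - (-(x - e)) = 2 * x := by ring
          rcases abs_cases x with ⟨hx, _⟩ | ⟨hx, _⟩
          · nlinarith [abs_nonneg (x - e), neg_abs_le (x + e), le_abs_self (x - e),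
              neg_abs_le (x - e), le_abs_self (x + e)]
          · nlinarith [neg_abs_le (x + e), le_abs_self (x - e),
              neg_abs_le (x - e), le_abs_self (x + e)]
        linarith
      have h1 : 1 / (1 + |a * (x ^ 2 - η ^ 2)|) ^ b ≤ f (c * (x + e)) := by
        apply base
        rw [hfact, abs_mul, abs_of_pos hc, hce]
        have : |a| * e * |x + e| ≤ |a| * (|x - e| * |x + e|) := by
          rw [mul_assoc]
          gcongr
        linarith
      have h2 : 0 ≤ f (c * (x - e)) := Real.rpow_nonneg (by positivity) _
      linarith
  have hint1 : Integrable (fun x : ℝ => f (c * (x - e))) :=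
    (hf.comp_mul_left' hc.ne').comp_sub_right e
  have hint2 : Integrable (fun x : ℝ => f (c * (x + e))) :=
    (hf.comp_mul_left' hc.ne').comp_add_right e
  have hmono : (∫ x : ℝ, 1 / (1 + |a * (x ^ 2 - η ^ 2)|) ^ b)
      ≤ ∫ x : ℝ, (f (c * (x - e)) + f (c * (x + e))) := by
    apply integral_mono_of_nonneg
    · filter_upwards with x; positivity
    · exact hint1.add hint2
    · filter_upwards with x; exact key x
  have hval1 : (∫ x : ℝ, f (c * (x - e))) = |c⁻¹| * I := by
    rw [show (fun x : ℝ => f (c * (x - e))) = (fun y : ℝ => f (c * y)) ∘ (fun x => x - e) from rfl]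
    rw [show (∫ x : ℝ, ((fun y : ℝ => f (c * y)) ∘ (fun x => x - e)) x)
        = ∫ x : ℝ, (fun y : ℝ => f (c * y)) (x - e) from rfl]
    rw [integral_sub_right_eq_self (fun y : ℝ => f (c * y)) e]
    rw [Measure.integral_comp_mul_left (fun y => f y) c]
    simp [smul_eq_mul, hI_def]
  have hval2 : (∫ x : ℝ, f (c * (x + e))) = |c⁻¹| * I := by
    rw [show (∫ x : ℝ, f (c * (x + e)))
        = ∫ x : ℝ, (fun y : ℝ => f (c * y)) (x + e) from rfl]
    rw [integral_add_right_eq_self (fun y : ℝ => f (c * y)) e]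
    rw [Measure.integral_comp_mul_left (fun y => f y) c]
    simp [smul_eq_mul, hI_def]
  rw [integral_add hint1 hint2, hval1, hval2] at hmono
  have : |c⁻¹| * I + |c⁻¹| * I ≤ (2 * I + 1) / |a * η| := by
    rw [abs_inv, ← hc_def, abs_of_pos hc]
    rw [div_eq_mul_inv]
    have : c⁻¹ * I + c⁻¹ * I = (2 * I) * c⁻¹ := by ring
    rw [this]
    exact mul_le_mul_of_nonneg_right (by linarith) (inv_nonneg.2 hc.le)
  linarith
end

section
/- Let b > 1. There exists a constant C > 0, depending only on b, such that for all nonzero real numbers a and η and for each choice of sign σ ∈ {+1, −1}: ∫_ℝ |x + ση| dx / ⟨a(x² + ση²)⟩^b ≤ C / |a|. -/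
open MeasureTheory

private lemma aux_affine (g : ℝ → ℝ) (hg : Integrable g) {c : ℝ} (hc : c ≠ 0) (d : ℝ) :
    Integrable (fun x : ℝ => g (c * x + d)) ∧
      (∫ x : ℝ, g (c * x + d)) = |c|⁻¹ * ∫ x : ℝ, g x := by
  have h1 : Integrable (fun x : ℝ => g (c * x)) := hg.comp_mul_left' hc
  have hfun : (fun x : ℝ => g (c * x + d)) = fun x : ℝ => (fun y : ℝ => g (c * y)) (x + d / c) := by
    funext x
    show g (c * x + d) = g (c * (x + d / c))
    congr 1
    field_simp
  constructor
  · rw [hfun]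
    exact h1.comp_add_right (d / c)
  · rw [hfun, integral_add_right_eq_self (fun y : ℝ => g (c * y)) (d / c),
      MeasureTheory.Measure.integral_comp_mul_left g c, abs_inv, smul_eq_mul]

private lemma helper_div (b c u t : ℝ) (hb : 0 ≤ b) (hc : 0 ≤ c) (hu : 0 < u) (hut : u ≤ t) :
    c / t ^ b ≤ c * u ^ (-b) := by
  have ht : 0 < t := lt_of_lt_of_le hu hut
  rw [div_eq_mul_inv, ← Real.rpow_neg ht.le]
  exact mul_le_mul_of_nonneg_left
    (Real.rpow_le_rpow_of_nonpos hu hut (neg_nonpos.2 hb)) hc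

private lemma helper_sqrt (b A m t : ℝ) (hb : 1 < b) (hA : 0 < A) (hm : 0 ≤ m)
    (ht : 1 + A * m ^ 2 ≤ t) :
    m / t ^ b ≤ (Real.sqrt A)⁻¹ * (1 + A * m ^ 2) ^ (-(b - 1 / 2)) := by
  have hP : (0:ℝ) < 1 + A * m ^ 2 := by positivity
  have hs : 0 < Real.sqrt A := Real.sqrt_pos.2 hA
  have step1 : m ≤ (Real.sqrt A)⁻¹ * (1 + A * m ^ 2) ^ ((1:ℝ) / 2) := by
    have h1 : Real.sqrt A * m = Real.sqrt (A * m ^ 2) := by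
      rw [Real.sqrt_mul hA.le, Real.sqrt_sq hm]
    have h2 : Real.sqrt (A * m ^ 2) ≤ Real.sqrt (1 + A * m ^ 2) :=
      Real.sqrt_le_sqrt (by linarith)
    have h3 : Real.sqrt A * m ≤ (1 + A * m ^ 2) ^ ((1:ℝ) / 2) := by
      rw [← Real.sqrt_eq_rpow]; rw [h1]; exact h2
    calc m = (Real.sqrt A)⁻¹ * (Real.sqrt A * m) := by field_simp
      _ ≤ (Real.sqrt A)⁻¹ * (1 + A * m ^ 2) ^ ((1:ℝ) / 2) :=
        mul_le_mul_of_nonneg_left h3 (inv_nonneg.2 hs.le)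
  calc m / t ^ b ≤ m * (1 + A * m ^ 2) ^ (-b) :=
        helper_div b m (1 + A * m ^ 2) t (by linarith) hm hP ht
    _ ≤ ((Real.sqrt A)⁻¹ * (1 + A * m ^ 2) ^ ((1:ℝ) / 2)) * (1 + A * m ^ 2) ^ (-b) :=
        mul_le_mul_of_nonneg_right step1 (Real.rpow_nonneg hP.le _)
    _ = (Real.sqrt A)⁻¹ * (1 + A * m ^ 2) ^ (-(b - 1 / 2)) := by
        rw [mul_assoc, ← Real.rpow_add hP]
        congr 1
        ring

set_option maxHeartbeats 1000000 in
theorem stmt_2 (b : ℝ) (hb : 1 < b) :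
    ∃ C : ℝ, 0 < C ∧ ∀ a η σ : ℝ, a ≠ 0 → η ≠ 0 → (σ = 1 ∨ σ = -1) →
      (∫ x : ℝ, |x + σ * η| / (1 + |a * (x ^ 2 + σ * η ^ 2)|) ^ b) ≤ C / |a| := by
  have hb0 : (0:ℝ) < b := lt_trans one_pos hb
  -- the two basic integrable profiles
  have hK : Integrable (fun x : ℝ => (1 + |x|) ^ (-b)) := by
    have := integrable_one_add_norm (E := ℝ) (μ := volume) (r := b) (by simpa using hb)
    simpa [Real.norm_eq_abs] using this
  have hK' : Integrable (fun x : ℝ => (1 + x ^ 2) ^ (-(b - 1 / 2))) := by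
    have h2 : (Module.finrank ℝ ℝ : ℝ) < 2 * b - 1 := by
      simp only [Module.finrank_self, Nat.cast_one]; linarith
    have h3 := integrable_rpow_neg_one_add_norm_sq (E := ℝ) (μ := volume) (r := 2 * b - 1) h2
    have : (fun x : ℝ => ((1:ℝ) + ‖x‖ ^ 2) ^ (-(2 * b - 1) / 2))
        = fun x : ℝ => (1 + x ^ 2) ^ (-(b - 1 / 2)) := by
      funext x
      rw [Real.norm_eq_abs, sq_abs]
      congr 1
      ring
    rwa [this] at h3
  set K : ℝ := ∫ x : ℝ, (1 + |x|) ^ (-b) with hKdef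
  set K' : ℝ := ∫ x : ℝ, (1 + x ^ 2) ^ (-(b - 1 / 2)) with hK'def
  have hKnn : 0 ≤ K := integral_nonneg fun x => Real.rpow_nonneg (by positivity) _
  have hK'nn : 0 ≤ K' := integral_nonneg fun x => Real.rpow_nonneg (by positivity) _
  refine ⟨4 * K + 2 * K' + 1, by positivity, ?_⟩
  intro a η σ ha hη hσ
  have hA : (0:ℝ) < |a| := abs_pos.2 ha
  have hE : (0:ℝ) < |η| := abs_pos.2 hη
  set A : ℝ := |a| with hAdef
  set E : ℝ := |η| with hEdef
  set s : ℝ := Real.sqrt A with hsdef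
  have hs : 0 < s := Real.sqrt_pos.2 hA
  have hss : s⁻¹ * s⁻¹ = A⁻¹ := by
    rw [← mul_inv]; congr 1; exact Real.mul_self_sqrt hA.le
  have hEsq : E ^ 2 = η ^ 2 := sq_abs η
  -- component integrals
  have comp1 : ∀ d : ℝ, Integrable (fun x : ℝ => (1 + A * E * |x - d|) ^ (-b)) ∧
      (∫ x : ℝ, (1 + A * E * |x - d|) ^ (-b)) = (A * E)⁻¹ * K := by
    intro d
    have hc : A * E ≠ 0 := by positivity
    have h := aux_affine (fun y : ℝ => (1 + |y|) ^ (-b)) hK hc (-(A * E * d))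
    have hfun : (fun x : ℝ => (fun y : ℝ => (1 + |y|) ^ (-b)) (A * E * x + -(A * E * d)))
        = fun x : ℝ => (1 + A * E * |x - d|) ^ (-b) := by
      funext x
      show (1 + |A * E * x + -(A * E * d)|) ^ (-b) = (1 + A * E * |x - d|) ^ (-b)
      congr 1
      have : A * E * x + -(A * E * d) = (A * E) * (x - d) := by ring
      rw [this, abs_mul, abs_of_pos (by positivity : (0:ℝ) < A * E)]
    rw [hfun] at h
    refine ⟨h.1, ?_⟩
    rw [h.2, abs_of_pos (by positivity : (0:ℝ) < A * E)]
  have comp2 : ∀ d : ℝ, Integrable (fun x : ℝ => (1 + A * (x - d) ^ 2) ^ (-(b - 1 / 2))) ∧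
      (∫ x : ℝ, (1 + A * (x - d) ^ 2) ^ (-(b - 1 / 2))) = s⁻¹ * K' := by
    intro d
    have hc : s ≠ 0 := hs.ne'
    have h := aux_affine (fun y : ℝ => (1 + y ^ 2) ^ (-(b - 1 / 2))) hK' hc (-(s * d))
    have hfun : (fun x : ℝ => (fun y : ℝ => (1 + y ^ 2) ^ (-(b - 1 / 2))) (s * x + -(s * d)))
        = fun x : ℝ => (1 + A * (x - d) ^ 2) ^ (-(b - 1 / 2)) := by
      funext x
      show (1 + (s * x + -(s * d)) ^ 2) ^ (-(b - 1 / 2)) = (1 + A * (x - d) ^ 2) ^ (-(b - 1 / 2))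
      congr 2
      have h1 : s * x + -(s * d) = s * (x - d) := by ring
      rw [h1, mul_pow, sq]
      rw [Real.mul_self_sqrt hA.le]
    rw [hfun] at h
    refine ⟨h.1, ?_⟩
    rw [h.2, abs_of_pos hs]
  rcases hσ with rfl | rfl
  · -- σ = 1
    simp only [one_mul]
    have habs : ∀ x : ℝ, |a * (x ^ 2 + η ^ 2)| = A * (x ^ 2 + E ^ 2) := by
      intro x
      rw [abs_mul, hEsq]
      congr 1
      exact abs_of_nonneg (by positivity)
    have hG1 := comp2 0
    have hG2 := comp1 0
    have hGint : Integrable (fun x : ℝ =>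
        s⁻¹ * (1 + A * (x - 0) ^ 2) ^ (-(b - 1 / 2)) + E * (1 + A * E * |x - 0|) ^ (-b)) :=
      (hG1.1.const_mul _).add (hG2.1.const_mul _)
    have hptw : ∀ x : ℝ, |x + η| / (1 + |a * (x ^ 2 + η ^ 2)|) ^ b ≤
        s⁻¹ * (1 + A * (x - 0) ^ 2) ^ (-(b - 1 / 2)) + E * (1 + A * E * |x - 0|) ^ (-b) := by
      intro x
      rw [habs x, sub_zero]
      have hD : (0:ℝ) < 1 + A * (x ^ 2 + E ^ 2) := by positivity
      have hnum : |x + η| ≤ |x| + E := by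
        calc |x + η| ≤ |x| + |η| := abs_add_le x η
          _ = |x| + E := rfl
      calc |x + η| / (1 + A * (x ^ 2 + E ^ 2)) ^ b
          ≤ (|x| + E) / (1 + A * (x ^ 2 + E ^ 2)) ^ b := by
            exact (div_le_div_iff_of_pos_right (by positivity)).2 hnum
        _ = |x| / (1 + A * (x ^ 2 + E ^ 2)) ^ b + E / (1 + A * (x ^ 2 + E ^ 2)) ^ b :=
            add_div _ _ _
        _ ≤ s⁻¹ * (1 + A * x ^ 2) ^ (-(b - 1 / 2)) + E * (1 + A * E * |x|) ^ (-b) := by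
            apply add_le_add
            · have := helper_sqrt b A |x| (1 + A * (x ^ 2 + E ^ 2)) hb hA (abs_nonneg x)
                (by nlinarith [sq_abs x, sq_nonneg x, sq_nonneg E])
              rwa [sq_abs x] at this
            · apply helper_div b E (1 + A * E * |x|) _ hb0.le hE.le (by positivity)
              nlinarith [sq_abs x, sq_nonneg (|x| - E), abs_nonneg x, hE.le, hA.le]
    calc (∫ x : ℝ, |x + η| / (1 + |a * (x ^ 2 + η ^ 2)|) ^ b)
        ≤ ∫ x : ℝ, (s⁻¹ * (1 + A * (x - 0) ^ 2) ^ (-(b - 1 / 2))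
            + E * (1 + A * E * |x - 0|) ^ (-b)) :=
          integral_mono_of_nonneg (Filter.Eventually.of_forall fun x => by positivity)
            hGint (Filter.Eventually.of_forall hptw)
      _ = s⁻¹ * (s⁻¹ * K') + E * ((A * E)⁻¹ * K) := by
          rw [integral_add (hG1.1.const_mul _) (hG2.1.const_mul _),
            integral_const_mul, integral_const_mul, hG1.2, hG2.2]
      _ ≤ (4 * K + 2 * K' + 1) / A := by
          rw [← mul_assoc, hss, div_eq_mul_inv]
          have h1 : E * ((A * E)⁻¹ * K) = A⁻¹ * K := by
            field_simp
          rw [h1]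
          have hAinv : (0:ℝ) ≤ A⁻¹ := by positivity
          nlinarith [mul_nonneg hAinv hKnn, mul_nonneg hAinv hK'nn]
  · -- σ = -1
    have habs : ∀ x : ℝ, |a * (x ^ 2 + -1 * η ^ 2)| = A * (|x - E| * |x + E|) := by
      intro x
      have harg : x ^ 2 + -1 * η ^ 2 = (x - E) * (x + E) := by rw [← hEsq]; ring
      rw [harg, abs_mul, abs_mul]
    have hG1 := comp2 E
    have hG1' := comp2 (-E)
    simp only [sub_neg_eq_add] at hG1'
    have hG2 := comp1 E
    have hG2' := comp1 (-E)
    simp only [sub_neg_eq_add] at hG2'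
    have hI1 : Integrable (fun x : ℝ => s⁻¹ * (1 + A * (x - E) ^ 2) ^ (-(b - 1 / 2))
        + s⁻¹ * (1 + A * (x + E) ^ 2) ^ (-(b - 1 / 2))) :=
      (hG1.1.const_mul _).add (hG1'.1.const_mul _)
    have hI2 : Integrable (fun x : ℝ => 2 * E * (1 + A * E * |x - E|) ^ (-b)
        + 2 * E * (1 + A * E * |x + E|) ^ (-b)) :=
      (hG2.1.const_mul _).add (hG2'.1.const_mul _)
    have hGint : Integrable (fun x : ℝ =>
        (s⁻¹ * (1 + A * (x - E) ^ 2) ^ (-(b - 1 / 2))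
          + s⁻¹ * (1 + A * (x + E) ^ 2) ^ (-(b - 1 / 2)))
        + (2 * E * (1 + A * E * |x - E|) ^ (-b) + 2 * E * (1 + A * E * |x + E|) ^ (-b))) :=
      hI1.add hI2
    have hptw : ∀ x : ℝ, |x + -1 * η| / (1 + |a * (x ^ 2 + -1 * η ^ 2)|) ^ b ≤
        (s⁻¹ * (1 + A * (x - E) ^ 2) ^ (-(b - 1 / 2))
          + s⁻¹ * (1 + A * (x + E) ^ 2) ^ (-(b - 1 / 2)))
        + (2 * E * (1 + A * E * |x - E|) ^ (-b) + 2 * E * (1 + A * E * |x + E|) ^ (-b)) := by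
      intro x
      rw [habs x]
      have hu0 : (0:ℝ) ≤ |x - E| := abs_nonneg _
      have hv0 : (0:ℝ) ≤ |x + E| := abs_nonneg _
      set u : ℝ := |x - E| with hu
      set v : ℝ := |x + E| with hv
      have hsum : 2 * E ≤ u + v := by
        have h0 : |(x + E) - (x - E)| ≤ v + u := by
          rw [sub_eq_add_neg]
          exact (abs_add_le _ _).trans (by rw [abs_neg])
        have h1 : (x + E) - (x - E) = 2 * E := by ring
        rw [h1, abs_of_pos (by positivity)] at h0
        linarith
      set m : ℝ := min u v with hmdef
      have hm0 : 0 ≤ m := le_min hu0 hv0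
      have hmu : m ≤ u := min_le_left u v
      have hmv : m ≤ v := min_le_right u v
      have hmm : m * m ≤ u * v := mul_le_mul hmu hmv hm0 hu0
      have hmE : m * E ≤ u * v := by
        rcases min_cases u v with ⟨h1, h2⟩ | ⟨h1, h2⟩
        · rw [hmdef, h1]
          exact mul_le_mul_of_nonneg_left (by linarith) hu0
        · rw [hmdef, h1, mul_comm u v]
          exact mul_le_mul_of_nonneg_left (by linarith) hv0
      have hnum : |x + -1 * η| ≤ m + 2 * E := by
        have h1 : |x + -1 * η| ≤ |x| + E := by
          rw [show x + -1 * η = x + -η by ring]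
          exact (abs_add_le _ _).trans (by rw [abs_neg])
        have h2 : |x| ≤ u + E := by
          have : |x| = |(x - E) + E| := by norm_num
          rw [this]
          exact (abs_add_le _ _).trans (by rw [abs_of_nonneg hE.le])
        have h3 : |x| ≤ v + E := by
          have : |x| = |(x + E) + -E| := by norm_num
          rw [this]
          refine (abs_add_le _ _).trans ?_
          rw [abs_neg, abs_of_nonneg hE.le]
        have h4 : |x| ≤ m + E := by
          have := le_min (show |x| - E ≤ u by linarith) (show |x| - E ≤ v by linarith)
          simp only [← hmdef] at this
          linarith
        linarith
      have hD : (0:ℝ) < 1 + A * (u * v) := by positivity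
      have hM : m / (1 + A * (u * v)) ^ b ≤
          s⁻¹ * (1 + A * (x - E) ^ 2) ^ (-(b - 1 / 2))
            + s⁻¹ * (1 + A * (x + E) ^ 2) ^ (-(b - 1 / 2)) := by
        have step1 : m / (1 + A * (u * v)) ^ b ≤ s⁻¹ * (1 + A * m ^ 2) ^ (-(b - 1 / 2)) :=
          helper_sqrt b A m (1 + A * (u * v)) hb hA hm0 (by
            rw [pow_two]
            linarith [mul_le_mul_of_nonneg_left hmm hA.le])
        have step2 : (1 + A * m ^ 2) ^ (-(b - 1 / 2)) ≤
            (1 + A * (x - E) ^ 2) ^ (-(b - 1 / 2)) + (1 + A * (x + E) ^ 2) ^ (-(b - 1 / 2)) := by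
          rcases min_cases u v with ⟨h1, _⟩ | ⟨h1, _⟩
          · have hmx : m ^ 2 = (x - E) ^ 2 := by rw [hmdef, h1, hu, sq_abs]
            rw [hmx]
            exact le_add_of_nonneg_right (Real.rpow_nonneg (by positivity) _)
          · have hmx : m ^ 2 = (x + E) ^ 2 := by rw [hmdef, h1, hv, sq_abs]
            rw [hmx]
            exact le_add_of_nonneg_left (Real.rpow_nonneg (by positivity) _)
        calc m / (1 + A * (u * v)) ^ b ≤ s⁻¹ * (1 + A * m ^ 2) ^ (-(b - 1 / 2)) := step1
          _ ≤ s⁻¹ * ((1 + A * (x - E) ^ 2) ^ (-(b - 1 / 2))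
                + (1 + A * (x + E) ^ 2) ^ (-(b - 1 / 2))) :=
              mul_le_mul_of_nonneg_left step2 (inv_nonneg.2 hs.le)
          _ = _ := mul_add _ _ _
      have h2E : (2 * E) / (1 + A * (u * v)) ^ b ≤
          2 * E * (1 + A * E * |x - E|) ^ (-b) + 2 * E * (1 + A * E * |x + E|) ^ (-b) := by
        have step1 : (2 * E) / (1 + A * (u * v)) ^ b ≤ 2 * E * (1 + A * E * m) ^ (-b) :=
          helper_div b (2 * E) (1 + A * E * m) (1 + A * (u * v)) hb0.le (by positivity)
            (by positivity) (by
              have h := mul_le_mul_of_nonneg_left hmE hA.le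
              calc 1 + A * E * m = 1 + A * (m * E) := by ring
                _ ≤ 1 + A * (u * v) := by linarith)
        have step2 : (1 + A * E * m) ^ (-b) ≤
            (1 + A * E * u) ^ (-b) + (1 + A * E * v) ^ (-b) := by
          rcases min_cases u v with ⟨h1, _⟩ | ⟨h1, _⟩
          · rw [hmdef, h1]
            exact le_add_of_nonneg_right (Real.rpow_nonneg (by positivity) _)
          · rw [hmdef, h1]
            exact le_add_of_nonneg_left (Real.rpow_nonneg (by positivity) _)
        calc (2 * E) / (1 + A * (u * v)) ^ b ≤ 2 * E * (1 + A * E * m) ^ (-b) := step1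
          _ ≤ 2 * E * ((1 + A * E * u) ^ (-b) + (1 + A * E * v) ^ (-b)) :=
              mul_le_mul_of_nonneg_left step2 (by positivity)
          _ = _ := mul_add _ _ _
      calc |x + -1 * η| / (1 + A * (u * v)) ^ b
          ≤ (m + 2 * E) / (1 + A * (u * v)) ^ b := by
            exact (div_le_div_iff_of_pos_right (by positivity)).2 hnum
        _ = m / (1 + A * (u * v)) ^ b + (2 * E) / (1 + A * (u * v)) ^ b := add_div _ _ _
        _ ≤ _ := add_le_add hM h2E
    calc (∫ x : ℝ, |x + -1 * η| / (1 + |a * (x ^ 2 + -1 * η ^ 2)|) ^ b)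
        ≤ ∫ x : ℝ, ((s⁻¹ * (1 + A * (x - E) ^ 2) ^ (-(b - 1 / 2))
            + s⁻¹ * (1 + A * (x + E) ^ 2) ^ (-(b - 1 / 2)))
          + (2 * E * (1 + A * E * |x - E|) ^ (-b) + 2 * E * (1 + A * E * |x + E|) ^ (-b))) :=
          integral_mono_of_nonneg (Filter.Eventually.of_forall fun x => by positivity)
            hGint (Filter.Eventually.of_forall hptw)
      _ = (s⁻¹ * (s⁻¹ * K') + s⁻¹ * (s⁻¹ * K'))
          + (2 * E * ((A * E)⁻¹ * K) + 2 * E * ((A * E)⁻¹ * K)) := by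
          rw [integral_add hI1 hI2,
            integral_add (hG1.1.const_mul _) (hG1'.1.const_mul _),
            integral_add (hG2.1.const_mul _) (hG2'.1.const_mul _),
            integral_const_mul, integral_const_mul, integral_const_mul, integral_const_mul,
            hG1.2, hG1'.2, hG2.2, hG2'.2]
      _ ≤ (4 * K + 2 * K' + 1) / A := by
          rw [div_eq_mul_inv]
          have h1 : 2 * E * ((A * E)⁻¹ * K) = 2 * (A⁻¹ * K) := by
            field_simp
          have h2 : s⁻¹ * (s⁻¹ * K') = A⁻¹ * K' := by
            rw [← mul_assoc, hss]
          rw [h1, h2]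
          have hAinv : (0:ℝ) ≤ A⁻¹ := by positivity
          nlinarith [mul_nonneg hAinv hKnn, mul_nonneg hAinv hK'nn]
end

section
/- Let l > 1/3. There exists a constant C > 0, depending only on l, such that for all real coefficients a₀, a₁, a₂: ∫_ℝ dx / ⟨x³ + a₂x² + a₁x + a₀⟩^l ≤ C. In particular the bound is uniform in the coefficients a₀, a₁, a₂. -/
/-!
Let `p` be a monic real polynomial of degree `n` and `S` the set of real parts of its complex
roots. If `b ∈ S` is nearest to `x`, then every factor of `|p x| = ∏ |x - z|` is at least
`|x - b|`, so `|p x| ≥ |x - b| ^ n` and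
`⟨p x⟩ ^ (-l) ≲ ⟨x - b⟩ ^ (-n l) ≤ ∑_{b ∈ S} ⟨x - b⟩ ^ (-n l)`.
For `n l > 1` each summand is integrable with an integral independent of `b`, and `#S ≤ n`,
which gives a bound depending only on `n` and `l`.
-/

open MeasureTheory Polynomial

theorem Polynomial.Monic.pow_natDegree_le_abs_eval {p : ℝ[X]} (hp : p.Monic) {x m : ℝ}
    (hm : 0 ≤ m) (h : ∀ z ∈ p.aroots ℂ, m ≤ |x - z.re|) : m ^ p.natDegree ≤ |p.eval x| := by
  have hsplits : (p.map (algebraMap ℝ ℂ)).Splits := IsAlgClosed.splits _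
  have heval : |p.eval x| = ((p.aroots ℂ).map fun z => ‖(x : ℂ) - z‖).prod := by
    have hcast : ((p.eval x : ℝ) : ℂ) = p.aeval (x : ℂ) :=
      (aeval_algebraMap_apply_eq_algebraMap_eval x p).symm
    rw [← Real.norm_eq_abs, ← Complex.norm_real, hcast,
      hsplits.aeval_eq_prod_aroots_of_monic hp]
    exact (map_multiset_prod (normHom : ℂ →*₀ ℝ) _).trans (by simp [Multiset.map_map])
  rw [heval, ← IsAlgClosed.card_aroots_eq_natDegree (B := ℂ), ← Multiset.prod_replicate,
    ← Multiset.map_const']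
  refine Multiset.prod_map_le_prod_map₀ _ _ (fun _ _ => hm) fun z hz => (h z hz).trans ?_
  simpa using Complex.abs_re_le_norm ((x : ℂ) - z)

theorem one_div_one_add_abs_rpow_le {n : ℕ} {l m P : ℝ} (hl : 0 ≤ l) (hm : 0 ≤ m)
    (hP : m ^ n ≤ |P|) : 1 / (1 + |P|) ^ l ≤ 2 ^ (n * l) * (1 + m) ^ (-(n * l)) := by
  have hpow : (1 + m) ^ n ≤ 2 ^ n * (1 + |P|) := calc
    (1 + m) ^ n ≤ 2 ^ (n - 1) * (1 ^ n + m ^ n) := add_pow_le zero_le_one hm n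
    _ ≤ 2 ^ n * (1 + |P|) := by
      rw [one_pow]
      gcongr
      · norm_num
      · exact Nat.sub_le n 1
  have hrpow : (1 + m) ^ (n * l) ≤ 2 ^ (n * l) * (1 + |P|) ^ l := by
    rw [Real.rpow_mul (by positivity), Real.rpow_mul (by norm_num), Real.rpow_natCast,
      Real.rpow_natCast, ← Real.mul_rpow (by positivity) (by positivity)]
    gcongr
  rw [Real.rpow_neg (by positivity), ← div_eq_mul_inv,
    div_le_div_iff₀ (by positivity) (by positivity)]
  linarith

theorem Polynomial.Monic.one_div_one_add_abs_eval_rpow_le_sum {p : ℝ[X]} (hp : p.Monic)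
    (hdeg : 0 < p.natDegree) {l : ℝ} (hl : 0 ≤ l) (x : ℝ) :
    1 / (1 + |p.eval x|) ^ l ≤ ∑ b ∈ ((p.aroots ℂ).map Complex.re).toFinset,
      2 ^ (p.natDegree * l) * (1 + |x - b|) ^ (-(p.natDegree * l)) := by
  set S := ((p.aroots ℂ).map Complex.re).toFinset
  have hS : S.Nonempty := by
    rw [Multiset.toFinset_nonempty, ← Multiset.card_pos, Multiset.card_map,
      IsAlgClosed.card_aroots_eq_natDegree]
    exact hdeg
  obtain ⟨b, hbS, hb⟩ := S.exists_min_image (fun b => |x - b|) hS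
  have hroots : ∀ z ∈ p.aroots ℂ, |x - b| ≤ |x - z.re| := fun z hz =>
    hb z.re (Multiset.mem_toFinset.mpr (Multiset.mem_map_of_mem _ hz))
  calc 1 / (1 + |p.eval x|) ^ l
      ≤ 2 ^ (p.natDegree * l) * (1 + |x - b|) ^ (-(p.natDegree * l)) :=
        one_div_one_add_abs_rpow_le hl (abs_nonneg _)
          (hp.pow_natDegree_le_abs_eval (abs_nonneg _) hroots)
    _ ≤ _ := Finset.single_le_sum (f := fun b => 2 ^ (p.natDegree * l) * (1 + |x - b|) ^ _)
        (fun _ _ => by positivity) hbS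

theorem Polynomial.Monic.integral_one_div_one_add_abs_eval_rpow_le {p : ℝ[X]} (hp : p.Monic)
    {l : ℝ} (hl : 1 < p.natDegree * l) :
    ∫ x, 1 / (1 + |p.eval x|) ^ l
      ≤ p.natDegree * 2 ^ (p.natDegree * l) * ∫ x, (1 + |x|) ^ (-(p.natDegree * l)) := by
  set n := p.natDegree
  set S := ((p.aroots ℂ).map Complex.re).toFinset
  have hn : 0 < n := Nat.pos_of_ne_zero fun h => by norm_num [h] at hl
  have hl0 : 0 ≤ l := (pos_of_mul_pos_right (one_pos.trans hl) n.cast_nonneg).le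
  have hbump : Integrable fun x : ℝ => (1 + |x|) ^ (-(n * l)) := by
    simpa using integrable_one_add_norm (E := ℝ) (μ := volume) (r := n * l) (by simpa using hl)
  have hterm : ∀ b ∈ S, Integrable fun x : ℝ => 2 ^ (n * l) * (1 + |x - b|) ^ (-(n * l)) :=
    fun b _ => (hbump.comp_sub_right b).const_mul _
  have hcard : (S.card : ℝ) ≤ n := by
    exact_mod_cast (Multiset.toFinset_card_le _).trans_eq
      ((Multiset.card_map _ _).trans IsAlgClosed.card_aroots_eq_natDegree)
  calc ∫ x, 1 / (1 + |p.eval x|) ^ l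
      ≤ ∫ x, ∑ b ∈ S, 2 ^ (n * l) * (1 + |x - b|) ^ (-(n * l)) :=
        integral_mono_of_nonneg (.of_forall fun x => by positivity)
          (integrable_finsetSum S hterm)
          (.of_forall (hp.one_div_one_add_abs_eval_rpow_le_sum hn hl0))
    _ = S.card * 2 ^ (n * l) * ∫ x, (1 + |x|) ^ (-(n * l)) := by
        have hshift (b : ℝ) : ∫ x, (1 + |x - b|) ^ (-(n * l)) = ∫ x, (1 + |x|) ^ (-(n * l)) :=
          integral_sub_right_eq_self (fun x : ℝ => (1 + |x|) ^ (-(n * l))) b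
        simp only [integral_finsetSum S hterm, integral_const_mul, hshift, Finset.sum_const,
          nsmul_eq_mul, mul_assoc]
    _ ≤ n * 2 ^ (n * l) * ∫ x, (1 + |x|) ^ (-(n * l)) := by gcongr

theorem stmt_3 (l : ℝ) (hl : 1 / 3 < l) :
    ∃ C : ℝ, 0 < C ∧ ∀ a₀ a₁ a₂ : ℝ,
      (∫ x : ℝ, 1 / (1 + |x ^ 3 + a₂ * x ^ 2 + a₁ * x + a₀|) ^ l) ≤ C := by
  refine ⟨3 * 2 ^ (3 * l) * (∫ x : ℝ, (1 + |x|) ^ (-(3 * l))) + 1, by positivity,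
    fun a₀ a₁ a₂ => ?_⟩
  set p : ℝ[X] := X ^ 3 + C a₂ * X ^ 2 + C a₁ * X + C a₀
  have hmonic : p.Monic := by unfold p; monicity!
  have hdeg : p.natDegree = 3 := by unfold p; compute_degree!
  have hbound := hmonic.integral_one_div_one_add_abs_eval_rpow_le (l := l)
    (by rw [hdeg]; push_cast; linarith)
  simp only [hdeg, p, eval_add, eval_mul, eval_pow, eval_C, eval_X] at hbound
  push_cast at hbound
  linarith
end

section
/- Let 0 < α < 1, s < −1/2, and t > 0 be fixed. For functions φ, ψ : ℝ → ℂ whose Fourier transforms φ̂, ψ̂ are bounded measurable functions with compact support, define A(ξ, ξ₁, ξ₂) = ξ₁³ + α ξ₂³ + α (ξ−ξ₁−ξ₂)³ − ξ³ and F(ξ) = ξ · ∫_{ℝ²} φ̂(ξ₁) ψ̂(ξ₂) ψ̂(ξ−ξ₁−ξ₂) · E(t, A(ξ,ξ₁,ξ₂)) dξ₁ dξ₂, where E(t, A) = (e^{itA} − 1)/(iA) if A ≠ 0 and E(t, 0) = t. Then there is no constant C > 0 such that ‖⟨ξ⟩^{s} F(ξ)‖_{L²_ξ(ℝ)} ≤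 C ‖φ‖_{H^s(ℝ)} ‖ψ‖²_{H^s(ℝ)} holds for all such φ, ψ; that is, for every C > 0 there exist φ, ψ with bounded compactly supported Fourier transforms violating the inequality. (Up to the unimodular factor −6ie^{itξ³}, F(ξ) is the spatial Fourier transform of the third derivative at the origin of the data-to-solution map for the coupled mKdV system v_t + v_{xxx} + (vw²)_x = 0, w_t + α w_{xxx} + (v²w)_x = 0 with data (δφ, δψ); hence this data-to-solution map is not C³ at the origin from H^s × H^s to C([0,T]; H^s × H^s) when s < −1/2.) -/
open MeasureTheory

/-- `g` is a bounded measurable function with compact support on `ℝ`. -/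
def BddMeasCompSupp1 (g : ℝ → ℂ) : Prop :=
  Measurable g ∧ (∃ M : ℝ, ∀ x, ‖g x‖ ≤ M) ∧ HasCompactSupport g

/-- The resonance function `A(ξ, ξ₁, ξ₂) = ξ₁³ + αξ₂³ + α(ξ-ξ₁-ξ₂)³ - ξ³`. -/
def phaseA (α ξ ξ₁ ξ₂ : ℝ) : ℝ :=
  ξ₁ ^ 3 + α * ξ₂ ^ 3 + α * (ξ - ξ₁ - ξ₂) ^ 3 - ξ ^ 3

/-- `E(t, A) = (e^{itA} - 1)/(iA)` for `A ≠ 0`, and `E(t, 0) = t`. -/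
noncomputable def Efun (t A : ℝ) : ℂ :=
  if A = 0 then (t : ℂ)
  else (Complex.exp (Complex.I * ((t * A : ℝ) : ℂ)) - 1) / (Complex.I * ((A : ℝ) : ℂ))

/-!
Take `φ̂ = 1_{(N, N+γ]}` and `ψ̂ = 1_{(-N, -N+γ] ∪ (N, N+γ]}` with `γ ≈ 1 / (t N²)`. For `ξ`
slightly above `N + γ`, the only frequency triples contributing to `F(ξ)` lie near `(N, N, -N)`
or `(N, -N, N)`. The resonance function vanishes at these points and has gradient `O(N²)` near
them, so `|t A| ≲ t N² γ ≤ 1` and `Re E(t, A) = t sinc(t A) ≥ t / 2`: there is no cancellation,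
and `|F(ξ)| ≳ N t γ²` on an interval of length `γ / 4`. Hence `‖⟨ξ⟩^s F‖ ≳ N^{s+1} t γ^{5/2}`,
while the right-hand side is `≲ C N^{3s} γ^{3/2}`. The ratio is `≈ t γ N^{1-2s} ≈ N^{-1-2s}`,
unbounded as `N → ∞` exactly when `s < -1/2`.
-/

open Set Real Filter

lemma measurable_Efun (t : ℝ) : Measurable (Efun t) :=
  Measurable.ite (measurableSet_singleton 0) measurable_const (by fun_prop)

lemma re_Efun (t A : ℝ) : (Efun t A).re = t * sinc (t * A) := by
  rcases eq_or_ne A 0 with rfl | hA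
  · simp [Efun]
  rcases eq_or_ne t 0 with rfl | ht
  · simp [Efun]
  rw [Efun, if_neg hA, sinc_of_ne_zero (mul_ne_zero ht hA), mul_comm Complex.I, Complex.div_re,
    Complex.sub_re, Complex.sub_im, Complex.exp_ofReal_mul_I_re, Complex.exp_ofReal_mul_I_im]
  simp only [Complex.mul_re, Complex.mul_im, Complex.I_re, Complex.I_im, Complex.ofReal_re,
    Complex.ofReal_im, Complex.one_re, Complex.one_im, Complex.normSq_mul, Complex.normSq_I,
    Complex.normSq_ofReal]
  field_simp
  ring

lemma norm_Efun_le (t A : ℝ) : ‖Efun t A‖ ≤ |t| := by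
  rcases eq_or_ne A 0 with rfl | hA
  · simp [Efun]
  rw [Efun, if_neg hA, norm_div, div_le_iff₀ (by simpa using hA)]
  calc ‖Complex.exp (Complex.I * ((t * A : ℝ) : ℂ)) - 1‖ ≤ ‖t * A‖ :=
        norm_exp_I_mul_ofReal_sub_one_le
    _ = |t| * ‖Complex.I * ((A : ℝ) : ℂ)‖ := by simp

lemma half_le_sinc {x : ℝ} (hx : |x| ≤ 1) : 1 / 2 ≤ sinc x := by
  wlog hx0 : 0 ≤ x generalizing x
  · simpa [sinc_neg] using this (x := -x) (by rwa [abs_neg]) (by linarith)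
  rcases hx0.eq_or_lt with rfl | hpos
  · norm_num
  rw [sinc_of_ne_zero hpos.ne', le_div_iff₀ hpos]
  have hx1 : x ≤ 1 := (abs_le.mp hx).2
  nlinarith [sin_gt_sub_cube hpos, mul_le_mul hx1 hx1 hpos.le zero_le_one]

lemma half_le_re_Efun {t A : ℝ} (ht : 0 ≤ t) (h : |t * A| ≤ 1) : t / 2 ≤ (Efun t A).re := by
  rw [re_Efun]
  nlinarith [half_le_sinc h]

lemma abs_cubic_deviation_le {α N γ u v w : ℝ} (hα0 : 0 ≤ α) (hα1 : α ≤ 1) (hN : 1 ≤ N)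
    (hγ : γ ≤ 1) (hu : u ∈ Icc 0 γ) (hv : v ∈ Icc 0 γ) (hw : w ∈ Icc 0 γ) :
    |(N + u) ^ 3 + α * (N + v) ^ 3 + α * (w - N) ^ 3 - (N + u + v + w) ^ 3| ≤
      72 * N ^ 2 * γ := by
  obtain ⟨hu0, hu1⟩ := hu
  obtain ⟨hv0, hv1⟩ := hv
  obtain ⟨hw0, hw1⟩ := hw
  have hγ0 : 0 ≤ γ := hu0.trans hu1
  have h₁ : |(α - 1) * (v + w)| ≤ 2 * γ := by
    rw [abs_le]; constructor <;> nlinarith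
  have h₂ : |u ^ 2 + α * v ^ 2 - α * w ^ 2 - (u + v + w) ^ 2| ≤ 12 * γ := by
    rw [abs_le]
    constructor <;>
      nlinarith [mul_nonneg hα0 (mul_nonneg hv0 hv0), mul_nonneg hα0 (mul_nonneg hw0 hw0)]
  have h₃ : |u ^ 3 + α * v ^ 3 + α * w ^ 3 - (u + v + w) ^ 3| ≤ 30 * γ := by
    have hS : (u + v + w) ^ 3 ≤ 27 * γ := by
      nlinarith [pow_le_pow_left₀ (by positivity : 0 ≤ u + v + w)
        (by linarith : u + v + w ≤ 3 * γ) 3, pow_le_pow_left₀ hγ0 hγ 2]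
    have hcube : ∀ x, 0 ≤ x → x ≤ γ → x ^ 3 ≤ γ := fun x hx0 hx1 =>
      (pow_le_pow_left₀ hx0 hx1 3).trans (pow_le_of_le_one hγ0 hγ (by norm_num))
    rw [abs_le]
    constructor
    · nlinarith [mul_nonneg hα0 (pow_nonneg hv0 3), mul_nonneg hα0 (pow_nonneg hw0 3),
        pow_nonneg hu0 3]
    · nlinarith [mul_le_of_le_one_left (pow_nonneg hv0 3) hα1,
        mul_le_of_le_one_left (pow_nonneg hw0 3) hα1, hcube u hu0 hu1, hcube v hv0 hv1,
        hcube w hw0 hw1, pow_nonneg (add_nonneg (add_nonneg hu0 hv0) hw0) 3]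
  calc _ = |3 * N ^ 2 * ((α - 1) * (v + w))
          + 3 * N * (u ^ 2 + α * v ^ 2 - α * w ^ 2 - (u + v + w) ^ 2)
          + (u ^ 3 + α * v ^ 3 + α * w ^ 3 - (u + v + w) ^ 3)| := by ring_nf
    _ ≤ 3 * N ^ 2 * |(α - 1) * (v + w)|
          + 3 * N * |u ^ 2 + α * v ^ 2 - α * w ^ 2 - (u + v + w) ^ 2|
          + |u ^ 3 + α * v ^ 3 + α * w ^ 3 - (u + v + w) ^ 3| := by
      refine (abs_add_three _ _ _).trans_eq ?_
      rw [abs_mul, abs_mul (3 * N), abs_of_nonneg (by positivity : (0 : ℝ) ≤ 3 * N ^ 2),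
        abs_of_nonneg (by positivity : (0 : ℝ) ≤ 3 * N)]
    _ ≤ 3 * N ^ 2 * (2 * γ) + 3 * N * (12 * γ) + 30 * γ := by gcongr
    _ ≤ 72 * N ^ 2 * γ := by
      nlinarith [mul_le_mul_of_nonneg_right (by nlinarith : N ≤ N ^ 2) hγ0,
        mul_le_mul_of_nonneg_right (by nlinarith : 1 ≤ N ^ 2) hγ0]

lemma phaseA_sub_sub (α ξ ξ₁ ξ₂ : ℝ) : phaseA α ξ ξ₁ (ξ - ξ₁ - ξ₂) = phaseA α ξ ξ₁ ξ₂ := by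
  unfold phaseA; ring

def bump (N γ : ℝ) : Set ℝ := Ioc N (N + γ)

def bumpPair (N γ : ℝ) : Set ℝ := Ioc (-N) (-N + γ) ∪ bump N γ

lemma measurableSet_bump (N γ : ℝ) : MeasurableSet (bump N γ) := measurableSet_Ioc

lemma measurableSet_bumpPair (N γ : ℝ) : MeasurableSet (bumpPair N γ) :=
  measurableSet_Ioc.union (measurableSet_bump N γ)

lemma isBounded_bump (N γ : ℝ) : Bornology.IsBounded (bump N γ) := Metric.isBounded_Ioc _ _

lemma isBounded_bumpPair (N γ : ℝ) : Bornology.IsBounded (bumpPair N γ) :=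
  (Metric.isBounded_Ioc _ _).union (isBounded_bump N γ)

lemma bump_subset_bumpPair (N γ : ℝ) : bump N γ ⊆ bumpPair N γ := subset_union_right

lemma volume_real_bump {N γ : ℝ} (hγ : 0 ≤ γ) : volume.real (bump N γ) = γ := by
  rw [bump, volume_real_Ioc_of_le (by linarith), add_sub_cancel_left]

lemma volume_real_bumpPair {N γ : ℝ} (hγ : 0 ≤ γ) (hγN : γ ≤ N) :
    volume.real (bumpPair N γ) = 2 * γ := by
  rw [bumpPair, bump, measureReal_union (Ioc_disjoint_Ioc_of_le (by linarith)) measurableSet_Ioc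
    measure_Ioc_lt_top.ne measure_Ioc_lt_top.ne, volume_real_Ioc_of_le (by linarith),
    volume_real_Ioc_of_le (by linarith), add_sub_cancel_left, add_sub_cancel_left, two_mul]

lemma le_one_add_abs_of_mem_bumpPair {N γ x : ℝ} (hγ : γ ≤ 1) (hx : x ∈ bumpPair N γ) :
    N ≤ 1 + |x| := by
  rcases hx with hx | hx
  · linarith [neg_le_abs x, hx.2]
  · linarith [le_abs_self x, hx.1]

lemma abs_phaseA_le {α N γ ξ ξ₁ ξ₂ : ℝ} (hα0 : 0 ≤ α) (hα1 : α ≤ 1) (hN : 1 ≤ N) (hγ : γ ≤ 1)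
    (h₁ : ξ₁ ∈ bump N γ) (h₂ : ξ₂ ∈ bump N γ) (h₃ : ξ - ξ₁ - ξ₂ ∈ Ioc (-N) (-N + γ)) :
    |phaseA α ξ ξ₁ ξ₂| ≤ 72 * N ^ 2 * γ := by
  obtain ⟨h₁, h₁'⟩ := h₁
  obtain ⟨h₂, h₂'⟩ := h₂
  obtain ⟨h₃, h₃'⟩ := h₃
  convert abs_cubic_deviation_le hα0 hα1 hN hγ (u := ξ₁ - N) (v := ξ₂ - N)
    (w := ξ - ξ₁ - ξ₂ + N) ⟨by linarith, by linarith⟩ ⟨by linarith, by linarith⟩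
    ⟨by linarith, by linarith⟩ using 2
  unfold phaseA; ring

def convSupport (I J : Set ℝ) (ξ : ℝ) : Set (ℝ × ℝ) :=
  {p | p.1 ∈ I ∧ p.2 ∈ J ∧ ξ - p.1 - p.2 ∈ J}

lemma measurableSet_convSupport {I J : Set ℝ} (hI : MeasurableSet I) (hJ : MeasurableSet J)
    (ξ : ℝ) : MeasurableSet (convSupport I J ξ) :=
  (measurable_fst hI).inter ((measurable_snd hJ).inter
    ((by fun_prop : Measurable fun p : ℝ × ℝ => ξ - p.1 - p.2) hJ))

lemma isBounded_convSupport {I J : Set ℝ} (hI : Bornology.IsBounded I)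
    (hJ : Bornology.IsBounded J) (ξ : ℝ) : Bornology.IsBounded (convSupport I J ξ) :=
  (hI.prod hJ).subset fun _ hp => ⟨hp.1, hp.2.1⟩

lemma indicator_mul_indicator_mul_indicator_mul (I J : Set ℝ) (ξ : ℝ) (F : ℝ × ℝ → ℂ)
    (p : ℝ × ℝ) : I.indicator (fun _ => 1) p.1 * J.indicator (fun _ => 1) p.2 *
      J.indicator (fun _ => 1) (ξ - p.1 - p.2) * F p = (convSupport I J ξ).indicator F p := by
  simp only [convSupport, Set.indicator]
  split_ifs <;> simp_all

lemma abs_phaseA_le_of_mem_convSupport {α N γ ξ : ℝ} {p : ℝ × ℝ} (hα0 : 0 ≤ α) (hα1 : α ≤ 1)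
    (hN : 1 ≤ N) (hγ : γ ≤ 1) (hξ : ξ ∈ Ioc (N + γ) (N + 5 * γ / 4))
    (hp : p ∈ convSupport (bump N γ) (bumpPair N γ) ξ) :
    |phaseA α ξ p.1 p.2| ≤ 72 * N ^ 2 * γ := by
  obtain ⟨h₁, h₂ | h₂, h₃ | h₃⟩ := hp
  · exfalso; linarith [h₁.2, h₂.2, h₃.2, hξ.1]
  · rw [← phaseA_sub_sub]
    exact abs_phaseA_le hα0 hα1 hN hγ h₁ h₃ (by rwa [sub_sub_cancel])
  · exact abs_phaseA_le hα0 hα1 hN hγ h₁ h₂ h₃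
  · exfalso; linarith [h₁.1, h₂.1, h₃.1, hξ.2]

lemma measureReal_mul_le_norm_integral {X : Type*} [MeasurableSpace X] {μ : Measure X}
    {f : X → ℂ} {R : Set X} {c : ℝ} (hf : Integrable f μ) (hR : MeasurableSet R) (hμR : μ R ≠ ⊤)
    (h₀ : ∀ x, 0 ≤ (f x).re) (hc : ∀ x ∈ R, c ≤ (f x).re) : μ.real R * c ≤ ‖∫ x, f x ∂μ‖ :=
  calc μ.real R * c = ∫ x, R.indicator (fun _ => c) x ∂μ := by
        rw [integral_indicator_const _ hR, smul_eq_mul]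
    _ ≤ ∫ x, (f x).re ∂μ := by
        refine integral_mono ((integrable_indicator_iff hR).2 (integrableOn_const hμR)) hf.re
          fun x => ?_
        by_cases hx : x ∈ R
        · simpa [hx] using hc x hx
        · simpa [hx] using h₀ x
    _ = (∫ x, f x ∂μ).re := integral_re hf
    _ ≤ ‖∫ x, f x ∂μ‖ := Complex.re_le_norm _

/-- `F(ξ) = ξ * trilinearIntegral α t φ̂ ψ̂ ξ`. -/
noncomputable def trilinearIntegral (α t : ℝ) (g h : ℝ → ℂ) (ξ : ℝ) : ℂ :=
  ∫ p : ℝ × ℝ, g p.1 * h p.2 * h (ξ - p.1 - p.2) * Efun t (phaseA α ξ p.1 p.2)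

lemma le_norm_trilinearIntegral_bump {α t N γ ξ : ℝ} (hα0 : 0 ≤ α) (hα1 : α ≤ 1) (ht : 0 ≤ t)
    (hN : 1 ≤ N) (hγ0 : 0 ≤ γ) (hγ1 : γ ≤ 1) (htγ : 72 * t * N ^ 2 * γ ≤ 1)
    (hξ : ξ ∈ Ioc (N + γ) (N + 5 * γ / 4)) :
    t * γ ^ 2 / 16 ≤ ‖trilinearIntegral α t ((bump N γ).indicator fun _ => 1)
      ((bumpPair N γ).indicator fun _ => 1) ξ‖ := by
  simp_rw [trilinearIntegral,
    indicator_mul_indicator_mul_indicator_mul _ _ _ fun p => Efun t (phaseA α ξ p.1 p.2)]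
  set T := convSupport (bump N γ) (bumpPair N γ) ξ
  have hT : MeasurableSet T :=
    measurableSet_convSupport (measurableSet_bump N γ) (measurableSet_bumpPair N γ) ξ
  have hμT : volume T ≠ ⊤ :=
    (isBounded_convSupport (isBounded_bump N γ) (isBounded_bumpPair N γ) ξ).measure_lt_top.ne
  have hre : ∀ p ∈ T, t / 2 ≤ (Efun t (phaseA α ξ p.1 p.2)).re := fun p hp =>
    half_le_re_Efun ht <| by
      rw [abs_mul, abs_of_nonneg ht]
      nlinarith [abs_phaseA_le_of_mem_convSupport hα0 hα1 hN hγ1 hξ hp]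
  set R : Set (ℝ × ℝ) := Ioc N (N + γ / 4) ×ˢ Ioc (N + γ / 4) (N + 3 * γ / 4)
  have hRT : R ⊆ T := by
    rintro p ⟨⟨h₁, h₁'⟩, ⟨h₂, h₂'⟩⟩
    obtain ⟨hξ, hξ'⟩ := hξ
    exact ⟨⟨h₁, by linarith⟩, .inr ⟨by linarith, by linarith⟩, .inl ⟨by linarith, by linarith⟩⟩
  have hint : Integrable (T.indicator fun p => Efun t (phaseA α ξ p.1 p.2)) := by
    refine (integrable_indicator_iff hT).2 (Measure.integrableOn_of_bounded hμT ?_ (M := |t|)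
      (ae_of_all _ fun p => norm_Efun_le t _))
    exact ((measurable_Efun t).comp (by unfold phaseA; fun_prop)).aestronglyMeasurable
  calc t * γ ^ 2 / 16 = volume.real R * (t / 2) := by
        rw [Measure.volume_eq_prod, measureReal_prod_prod, volume_real_Ioc_of_le (by linarith),
          volume_real_Ioc_of_le (by linarith)]
        ring
    _ ≤ _ := by
      refine measureReal_mul_le_norm_integral hint (measurableSet_Ioc.prod measurableSet_Ioc)
        ((Metric.isBounded_Ioc _ _).prod (Metric.isBounded_Ioc _ _)).measure_lt_top.ne
        (fun p => ?_) (fun p hp => ?_)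
      · by_cases hp : p ∈ T
        · simp only [indicator_of_mem hp]; linarith [hre p hp]
        · simp [hp]
      · simp only [indicator_of_mem (hRT hp)]; exact hre p (hRT hp)

section L2

variable {X E : Type*} [MeasurableSpace X] {μ : Measure X} [NormedAddCommGroup E] {s : Set X}
  {c : ℝ}

lemma eLpNorm_two_indicator_const (hs : MeasurableSet s) (hμs : μ s ≠ ⊤) (hc : 0 ≤ c) :
    eLpNorm (s.indicator fun _ => c) 2 μ = ENNReal.ofReal (c * √(μ.real s)) := by
  rw [eLpNorm_indicator_const hs two_ne_zero ENNReal.ofNat_ne_top, ← ofReal_measureReal hμs,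
    Real.enorm_of_nonneg hc, ENNReal.ofReal_mul hc, sqrt_eq_rpow,
    ENNReal.ofReal_rpow_of_nonneg measureReal_nonneg (by norm_num)]
  norm_num

lemma ofReal_mul_sqrt_le_eLpNorm_two {f : X → E} (hs : MeasurableSet s) (hμs : μ s ≠ ⊤)
    (hc : 0 ≤ c) (hf : ∀ x ∈ s, c ≤ ‖f x‖) :
    ENNReal.ofReal (c * √(μ.real s)) ≤ eLpNorm f 2 μ := by
  rw [← eLpNorm_two_indicator_const hs hμs hc]
  refine eLpNorm_mono fun x => ?_
  by_cases hx : x ∈ s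
  · simpa [hx, abs_of_nonneg hc] using hf x hx
  · simp [hx]

lemma eLpNorm_two_le_ofReal_mul_sqrt {f : X → E} (hs : MeasurableSet s) (hμs : μ s ≠ ⊤)
    (hc : 0 ≤ c) (hf : ∀ x ∈ s, ‖f x‖ ≤ c) (hf' : ∀ x ∉ s, f x = 0) :
    eLpNorm f 2 μ ≤ ENNReal.ofReal (c * √(μ.real s)) := by
  rw [← eLpNorm_two_indicator_const hs hμs hc]
  refine eLpNorm_mono fun x => ?_
  by_cases hx : x ∈ s
  · simpa [hx, abs_of_nonneg hc] using hf x hx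
  · simp [hx, hf' x hx]

end L2

lemma bddMeasCompSupp1_indicator_one {s : Set ℝ} (hs : MeasurableSet s)
    (hb : Bornology.IsBounded s) : BddMeasCompSupp1 (s.indicator fun _ => 1) :=
  ⟨measurable_const.indicator hs,
    ⟨1, fun x => (norm_indicator_le_norm_self _ x).trans_eq norm_one⟩,
    HasCompactSupport.intro hb.isCompact_closure fun _ hx =>
      indicator_of_notMem (fun h => hx (subset_closure h)) _⟩

section Weight

variable {s N γ : ℝ}

lemma eLpNorm_weight_mul_indicator_le {K : Set ℝ} (hs : s ≤ 0) (hN : 0 < N)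
    (hγ : γ ≤ 1) (hK : MeasurableSet K) (hKJ : K ⊆ bumpPair N γ) :
    eLpNorm (fun x => (1 + |x|) ^ s * ‖K.indicator (fun _ => (1 : ℂ)) x‖) 2 volume ≤
      ENNReal.ofReal (N ^ s * √(volume.real K)) := by
  refine eLpNorm_two_le_ofReal_mul_sqrt hK ((isBounded_bumpPair N γ).subset hKJ).measure_lt_top.ne
    (by positivity) (fun x hx => ?_) (fun x hx => by simp [hx])
  rw [indicator_of_mem hx, norm_one, mul_one, norm_of_nonneg (by positivity)]
  exact rpow_le_rpow_of_nonpos hN (le_one_add_abs_of_mem_bumpPair hγ (hKJ hx)) hs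

lemma eLpNorm_weight_mul_indicator_bump_le (hs : s ≤ 0) (hN : 0 < N) (hγ0 : 0 ≤ γ)
    (hγ1 : γ ≤ 1) :
    eLpNorm (fun x => (1 + |x|) ^ s * ‖(bump N γ).indicator (fun _ => (1 : ℂ)) x‖) 2 volume ≤
      ENNReal.ofReal (N ^ s * √γ) := by
  have h := eLpNorm_weight_mul_indicator_le hs hN hγ1 (measurableSet_bump N γ)
    (bump_subset_bumpPair N γ)
  rwa [volume_real_bump hγ0] at h

lemma eLpNorm_weight_mul_indicator_bumpPair_le (hs : s ≤ 0) (hN : 1 ≤ N) (hγ0 : 0 ≤ γ)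
    (hγ1 : γ ≤ 1) :
    eLpNorm (fun x => (1 + |x|) ^ s * ‖(bumpPair N γ).indicator (fun _ => (1 : ℂ)) x‖) 2 volume ≤
      ENNReal.ofReal (N ^ s * √(2 * γ)) := by
  have h := eLpNorm_weight_mul_indicator_le hs (by linarith) hγ1
    (measurableSet_bumpPair N γ) subset_rfl
  rwa [volume_real_bumpPair hγ0 (by linarith)] at h

end Weight

lemma ofReal_le_eLpNorm_weight_mul_trilinearIntegral {α s t N γ : ℝ} (hα0 : 0 ≤ α)
    (hα1 : α ≤ 1) (ht : 0 ≤ t) (hs : s ≤ 0) (hN : 1 ≤ N) (hγ0 : 0 ≤ γ) (hγ1 : γ ≤ 1)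
    (htγ : 72 * t * N ^ 2 * γ ≤ 1) :
    ENNReal.ofReal (4 ^ s * N ^ s * N * t * γ ^ 2 * √γ / 32) ≤
      eLpNorm (fun ξ : ℝ => (1 + |ξ|) ^ s * ‖(ξ : ℂ) * trilinearIntegral α t
        ((bump N γ).indicator fun _ => 1) ((bumpPair N γ).indicator fun _ => 1) ξ‖) 2 volume := by
  have hN0 : 0 < N := by linarith
  refine (le_of_eq ?_).trans (ofReal_mul_sqrt_le_eLpNorm_two (s := Ioc (N + γ) (N + 5 * γ / 4))
    measurableSet_Ioc measure_Ioc_lt_top.ne (c := (4 * N) ^ s * (N * (t * γ ^ 2 / 16)))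
    (by positivity) fun ξ hξ => ?_)
  · congr 1
    rw [volume_real_Ioc_of_le (by linarith), mul_rpow (by norm_num) hN0.le,
      show N + 5 * γ / 4 - (N + γ) = γ / 4 by ring, sqrt_div' _ (by norm_num : (0 : ℝ) ≤ 4),
      show (4 : ℝ) = 2 ^ 2 by norm_num, sqrt_sq (by norm_num)]
    ring
  have hξ0 : 0 < ξ := by linarith [hξ.1]
  rw [norm_mul, norm_norm, norm_mul, Complex.norm_real, norm_of_nonneg (by positivity),
    norm_of_nonneg hξ0.le, abs_of_pos hξ0]
  gcongr ?_ * (?_ * ?_)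
  · exact rpow_le_rpow_of_nonpos (by positivity) (by linarith [hξ.2]) hs
  · linarith [hξ.1]
  · exact le_norm_trilinearIntegral_bump hα0 hα1 ht hN hγ0 hγ1 htγ hξ

lemma exists_one_le_rpow_mul_rpow_mul_lt {s δ : ℝ} (hs : s < -(1 / 2)) (hδ : 0 < δ) :
    ∃ N : ℝ, 1 ≤ N ∧ N ^ s * N ^ s * N < δ := by
  obtain ⟨N, hN, hNδ⟩ := ((eventually_ge_atTop 1).and <|
    (tendsto_rpow_neg_atTop (y := -(s + s + 1)) (by linarith)).eventually (gt_mem_nhds hδ)).exists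
  refine ⟨N, hN, ?_⟩
  rwa [neg_neg, rpow_add_one (by positivity), rpow_add (by positivity)] at hNδ

lemma exists_bump_scale {s t C : ℝ} (hs : s < -(1 / 2)) (ht : 0 < t) (hC : 0 < C) :
    ∃ N γ : ℝ, 1 ≤ N ∧ 0 < γ ∧ γ ≤ 1 ∧ 72 * t * N ^ 2 * γ ≤ 1 ∧
      64 * C * N ^ s * N ^ s < 4 ^ s * t * N * γ := by
  set ε := 1 / (72 * t + 1)
  have hε0 : 0 < ε := by positivity
  have hε1 : ε ≤ 1 := div_le_one_of_le₀ (by linarith) (by positivity)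
  obtain ⟨N, hN, hNδ⟩ := exists_one_le_rpow_mul_rpow_mul_lt hs
    (by positivity : 0 < 4 ^ s * t * ε / (64 * C))
  have hN0 : 0 < N := by linarith
  have hγN : ε / N ^ 2 * N ^ 2 = ε := div_mul_cancel₀ _ (by positivity)
  refine ⟨N, ε / N ^ 2, hN, by positivity,
    div_le_one_of_le₀ (hε1.trans (one_le_pow₀ hN)) (by positivity), ?_, ?_⟩
  · rw [mul_assoc, mul_comm (N ^ 2), hγN, mul_one_div, div_le_one (by positivity)]
    linarith
  · rw [lt_div_iff₀ (by positivity)] at hNδ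
    refine lt_of_mul_lt_mul_right (a := N) ?_ hN0.le
    calc 64 * C * N ^ s * N ^ s * N = N ^ s * N ^ s * N * (64 * C) := by ring
      _ < 4 ^ s * t * ε := hNδ
      _ = 4 ^ s * t * N * (ε / N ^ 2) * N := by field_simp

theorem stmt_19 (α s t : ℝ) (hα0 : 0 < α) (hα1 : α < 1) (hs : s < -(1/2))
    (ht : 0 < t) :
    ∀ C : ℝ, 0 < C →
      ∃ g h : ℝ → ℂ,  -- the Fourier transforms `φ̂` and `ψ̂`
        BddMeasCompSupp1 g ∧ BddMeasCompSupp1 h ∧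
        ¬ (eLpNorm (fun ξ : ℝ => (1 + |ξ|) ^ s *
              ‖(ξ : ℂ) * ∫ p : ℝ × ℝ,
                  g p.1 * h p.2 * h (ξ - p.1 - p.2) * Efun t (phaseA α ξ p.1 p.2)‖)
            2 volume ≤
          ENNReal.ofReal C *
            (eLpNorm (fun ξ : ℝ => (1 + |ξ|) ^ s * ‖g ξ‖) 2 volume *
             eLpNorm (fun ξ : ℝ => (1 + |ξ|) ^ s * ‖h ξ‖) 2 volume ^ 2)) := by
  intro C hC
  obtain ⟨N, γ, hN, hγ0, hγ1, htγ, hscale⟩ := exists_bump_scale hs ht hC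
  refine ⟨(bump N γ).indicator fun _ => 1, (bumpPair N γ).indicator fun _ => 1,
    bddMeasCompSupp1_indicator_one (measurableSet_bump N γ) (isBounded_bump N γ),
    bddMeasCompSupp1_indicator_one (measurableSet_bumpPair N γ) (isBounded_bumpPair N γ),
    fun hle => ?_⟩
  have hs0 : s ≤ 0 := by linarith
  have hineq : ENNReal.ofReal (4 ^ s * N ^ s * N * t * γ ^ 2 * √γ / 32) ≤ ENNReal.ofReal C *
      (ENNReal.ofReal (N ^ s * √γ) * ENNReal.ofReal (N ^ s * √(2 * γ)) ^ 2) := by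
    refine ((ofReal_le_eLpNorm_weight_mul_trilinearIntegral hα0.le hα1.le ht.le hs0 hN hγ0.le
      hγ1 htγ).trans hle).trans ?_
    gcongr
    · exact eLpNorm_weight_mul_indicator_bump_le hs0 (by linarith) hγ0.le hγ1
    · exact eLpNorm_weight_mul_indicator_bumpPair_le hs0 hN hγ0.le hγ1
  rw [← ENNReal.ofReal_pow (by positivity), ← ENNReal.ofReal_mul (by positivity),
    ← ENNReal.ofReal_mul hC.le, ENNReal.ofReal_le_ofReal_iff (by positivity), mul_pow,
    sq_sqrt (by positivity)] at hineq
  have hpos : 0 < N ^ s * √γ * γ := by positivity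
  linarith [mul_lt_mul_of_pos_right hscale hpos]
end
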